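/- Let X and Y be complex Banach spaces, let ν, μ > 0, and for each integer j ≥ 1 let K_j : X^j → Y be a continuous j-multilinear map satisfying ‖K_j(ψ̃_1, …, ψ̃_j)‖_Y ≤ ν μ^{j−1} ∏_{i=1}^{j} ‖ψ̃_i‖_X for all ψ̃_1, …, ψ̃_j ∈ X. Let 𝒦₁ : Y → X be a bounded linear operator, let C = max(2, ν‖𝒦₁‖_{Y→X}), and set the radius of convergence r = (2μ(√(16C² + 1) + 4C))^{−1}. Given φ ∈ Y, define the inverse Born series terms recursively by ψ₁ = 𝒦₁(φ) and, for j ≥ 2, ψ_j = −𝒦₁(∑_{m=2}^{j} ∑_{(i₁,…,i_m) : i_t ≥ 1, i₁+⋯+i_m = j} K_m(ψ_{i₁}, …, ψ_{i_m})). If ‖𝒦₁(φ)‖_X < r, then the series ∑_{j=1}^{∞} ψ_j converges in X. -/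

import Mathlib

open Filter Topology

lemma icc_one_sum_eq_range {M : Type*} [AddCommMonoid M] (f : ℕ → M) (n : ℕ) :
    ∑ j ∈ Finset.Icc 1 n, f j = ∑ i ∈ Finset.range n, f (i + 1) := by
  apply Finset.sum_nbij' (fun j => j - 1) (fun i => i + 1)
  · intro a ha; simp only [Finset.mem_Icc] at ha; simp only [Finset.mem_range]; omega
  · intro a ha; simp only [Finset.mem_range] at ha; simp only [Finset.mem_Icc]; omega
  · intro a ha; simp only [Finset.mem_Icc] at ha; omega
  · intro a ha; omega
  · intro a ha; simp only [Finset.mem_Icc] at ha; congr 1; omega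

lemma geom_icc_le (q : ℝ) (hq0 : 0 ≤ q) (hq : q ≤ 1/2) (N : ℕ) :
    ∑ k ∈ Finset.Icc 1 N, q ^ k ≤ 2 * q - 2 * q ^ (N + 1) := by
  induction N with
  | zero => simp
  | succ N ih =>
    rw [Finset.sum_Icc_succ_top (by omega)]
    have h1 : q ^ (N + 2) ≤ (1/2) * q ^ (N + 1) := by
      have := pow_nonneg hq0 (N + 1)
      calc q ^ (N + 2) = q * q ^ (N + 1) := by ring
        _ ≤ (1/2) * q ^ (N + 1) := by nlinarith
    nlinarith [pow_nonneg hq0 (N+1)]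

theorem inverse_born_series_converges
    {X Y : Type*} [NormedAddCommGroup X] [NormedSpace ℂ X] [CompleteSpace X]
    [NormedAddCommGroup Y] [NormedSpace ℂ Y] [CompleteSpace Y]
    (ν μ : ℝ) (hν : 0 < ν) (hμ : 0 < μ)
    (K : (j : ℕ) → ContinuousMultilinearMap ℂ (fun _ : Fin j => X) Y)
    (hK : ∀ j : ℕ, 1 ≤ j → ∀ v : Fin j → X,
      ‖K j v‖ ≤ ν * μ ^ (j - 1) * ∏ i, ‖v i‖)
    (𝒦 : Y →L[ℂ] X)
    (C r : ℝ) (hC : C = max 2 (ν * ‖𝒦‖))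
    (hr : r = (2 * μ * (Real.sqrt (16 * C ^ 2 + 1) + 4 * C))⁻¹)
    (φ : Y) (ψ : ℕ → X)
    (hψ1 : ψ 1 = 𝒦 φ)
    (hψrec : ∀ j : ℕ, 2 ≤ j → ψ j =
      - 𝒦 (∑ m ∈ Finset.Icc 2 j,
        ∑ c ∈ (Fintype.piFinset fun _ : Fin m => Finset.Icc 1 j).filter
            (fun c => ∑ t, c t = j),
          K m (fun t => ψ (c t))))
    (hsmall : ‖𝒦 φ‖ < r) :
    ∃ L : X, Tendsto (fun N => ∑ j ∈ Finset.Icc 1 N, ψ j) atTop (𝓝 L) := by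
  set α := ‖𝒦 φ‖ with hαdef
  have hα0 : 0 ≤ α := norm_nonneg _
  have hC2 : (2:ℝ) ≤ C := by rw [hC]; exact le_max_left _ _
  have hCK : ν * ‖𝒦‖ ≤ C := by rw [hC]; exact le_max_right _ _
  have hC0 : (0:ℝ) < C := lt_of_lt_of_le (by norm_num) hC2
  have hsq : (1:ℝ) ≤ Real.sqrt (16 * C ^ 2 + 1) := by
    have h := Real.sqrt_le_sqrt (show (1:ℝ) ≤ 16 * C ^ 2 + 1 by nlinarith)
    simpa using h
  set D := Real.sqrt (16 * C ^ 2 + 1) + 4 * C with hD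
  have hD0 : (0:ℝ) < D := by positivity
  have hD4C : 4 * C ≤ D := by rw [hD]; nlinarith
  have hD8 : (8:ℝ) ≤ D := by nlinarith
  -- q bound
  set q := 2 * μ * α with hqdef
  have hq0 : 0 ≤ q := by positivity
  have hqD : q < 1 / D := by
    have h1 : α < (2 * μ * D)⁻¹ := by rw [hr] at hsmall; exact hsmall
    rw [hqdef]
    rw [inv_eq_one_div] at h1
    rw [lt_div_iff₀ hD0]
    rw [lt_div_iff₀ (by positivity)] at h1
    nlinarith
  have hqhalf : q ≤ 1 / 2 := le_trans hqD.le (by rw [div_le_div_iff₀ hD0 (by norm_num)]; nlinarith)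
  have h4Cq : 4 * C * q ≤ 1 := by
    have : 4 * C * q ≤ 4 * C * (1 / D) := by nlinarith
    calc 4 * C * q ≤ 4 * C * (1 / D) := this
      _ = 4 * C / D := by ring
      _ ≤ 1 := by rw [div_le_one hD0]; exact hD4C
  -- the key uniform bound on partial sums of norms
  have key : ∀ N : ℕ, ∑ j ∈ Finset.Icc 1 N, ‖ψ j‖ ≤ 2 * α := by
    intro N
    induction N with
    | zero => simpa using by positivity
    | succ N ih =>
      rcases Nat.eq_zero_or_pos N with h0 | hN
      · subst h0
        simp only [Finset.Icc_self, Finset.sum_singleton, hψ1]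
        linarith
      -- split off j = 1
      have hsplit : Finset.Icc 1 (N + 1) = insert 1 (Finset.Icc 2 (N + 1)) := by
        ext x; simp only [Finset.mem_Icc, Finset.mem_insert]; omega
      rw [hsplit, Finset.sum_insert (by simp)]
      rw [hψ1, ← hαdef]
      set S := ∑ i ∈ Finset.Icc 1 N, ‖ψ i‖ with hSdef
      have hS0 : 0 ≤ S := Finset.sum_nonneg fun i _ => norm_nonneg _
      have hT : ∑ j ∈ Finset.Icc 2 (N + 1), ‖ψ j‖ ≤ α := by
        -- step 1: per-term bound from the recursion
        have step1 : ∀ j ∈ Finset.Icc 2 (N + 1), ‖ψ j‖ ≤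
            ∑ m ∈ Finset.Icc 2 (N + 1), ∑ c ∈ (Fintype.piFinset fun _ : Fin m => Finset.Icc 1 j).filter
              (fun c => ∑ t, c t = j), (ν * ‖𝒦‖) * μ ^ (m - 1) * ∏ t, ‖ψ (c t)‖ := by
          intro j hj
          simp only [Finset.mem_Icc] at hj
          have hbound : ‖ψ j‖ ≤
              ∑ m ∈ Finset.Icc 2 j, ∑ c ∈ (Fintype.piFinset fun _ : Fin m => Finset.Icc 1 j).filter
                (fun c => ∑ t, c t = j), (ν * ‖𝒦‖) * μ ^ (m - 1) * ∏ t, ‖ψ (c t)‖ := by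
            rw [hψrec j hj.1, norm_neg]
            refine le_trans (𝒦.le_opNorm _) ?_
            refine le_trans (mul_le_mul_of_nonneg_left (norm_sum_le _ _) (norm_nonneg _)) ?_
            rw [Finset.mul_sum]
            refine Finset.sum_le_sum fun m hm => ?_
            refine le_trans (mul_le_mul_of_nonneg_left (norm_sum_le _ _) (norm_nonneg _)) ?_
            rw [Finset.mul_sum]
            refine Finset.sum_le_sum fun c hc => ?_
            simp only [Finset.mem_Icc] at hm
            calc ‖𝒦‖ * ‖K m fun t => ψ (c t)‖
                ≤ ‖𝒦‖ * (ν * μ ^ (m - 1) * ∏ t, ‖ψ (c t)‖) :=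
                  mul_le_mul_of_nonneg_left (hK m (by omega) _) (norm_nonneg _)
              _ = ν * ‖𝒦‖ * μ ^ (m - 1) * ∏ t, ‖ψ (c t)‖ := by ring
          refine le_trans hbound (Finset.sum_le_sum_of_subset_of_nonneg ?_ ?_)
          · intro m hm; simp only [Finset.mem_Icc] at *; omega
          · intro m _ _
            exact Finset.sum_nonneg fun c _ => by positivity
        -- step 2: sum over j, swap, and bound compositions by powers of S
        have step2 : ∑ j ∈ Finset.Icc 2 (N + 1), ‖ψ j‖ ≤
            ∑ m ∈ Finset.Icc 2 (N + 1), (ν * ‖𝒦‖) * μ ^ (m - 1) * S ^ m := by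
          refine le_trans (Finset.sum_le_sum step1) ?_
          rw [Finset.sum_comm]
          refine Finset.sum_le_sum fun m hm => ?_
          simp only [Finset.mem_Icc] at hm
          -- fix m; bound the double sum over j and compositions
          have hsub : ∀ j ∈ Finset.Icc 2 (N + 1),
              ((Fintype.piFinset fun _ : Fin m => Finset.Icc 1 j).filter
                (fun c => ∑ t, c t = j)) ⊆
              ((Fintype.piFinset fun _ : Fin m => Finset.Icc 1 N).filter
                (fun c => ∑ t, c t = j)) := by
            intro j hj c hc
            simp only [Finset.mem_Icc] at hj
            simp only [Finset.mem_filter, Fintype.mem_piFinset, Finset.mem_Icc] at hc ⊢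
            obtain ⟨hmem, hsum⟩ := hc
            refine ⟨fun t => ⟨(hmem t).1, ?_⟩, hsum⟩
            -- c t ≤ N since there are at least two parts each ≥ 1
            have h2m : 2 ≤ m := hm.1
            obtain ⟨t', htt', h1t'⟩ : ∃ t' : Fin m, t ≠ t' ∧ 1 ≤ c t' := by
              by_cases h : (t : ℕ) = 0
              · exact ⟨⟨1, by omega⟩, by simp [Fin.ext_iff, h], (hmem ⟨1, by omega⟩).1⟩
              · exact ⟨⟨0, by omega⟩, by simp [Fin.ext_iff]; omega, (hmem ⟨0, by omega⟩).1⟩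
            have hpair : c t + c t' ≤ ∑ s, c s := by
              have h := Finset.sum_le_sum_of_subset (Finset.subset_univ {t, t'}) (f := c)
              rwa [Finset.sum_pair htt'] at h
            omega
          calc ∑ j ∈ Finset.Icc 2 (N + 1),
                ∑ c ∈ (Fintype.piFinset fun _ : Fin m => Finset.Icc 1 j).filter
                  (fun c => ∑ t, c t = j), (ν * ‖𝒦‖) * μ ^ (m - 1) * ∏ t, ‖ψ (c t)‖
              ≤ ∑ j ∈ Finset.Icc 2 (N + 1),
                ∑ c ∈ (Fintype.piFinset fun _ : Fin m => Finset.Icc 1 N).filter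
                  (fun c => ∑ t, c t = j), (ν * ‖𝒦‖) * μ ^ (m - 1) * ∏ t, ‖ψ (c t)‖ := by
                refine Finset.sum_le_sum fun j hj => ?_
                exact Finset.sum_le_sum_of_subset_of_nonneg (hsub j hj)
                  (fun c _ _ => by positivity)
            _ = ∑ c ∈ (Fintype.piFinset fun _ : Fin m => Finset.Icc 1 N).filter
                  (fun c => (∑ t, c t) ∈ Finset.Icc 2 (N + 1)),
                  (ν * ‖𝒦‖) * μ ^ (m - 1) * ∏ t, ‖ψ (c t)‖ :=
                Finset.sum_fiberwise_eq_sum_filter _ _ _ _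
            _ ≤ ∑ c ∈ (Fintype.piFinset fun _ : Fin m => Finset.Icc 1 N),
                  (ν * ‖𝒦‖) * μ ^ (m - 1) * ∏ t, ‖ψ (c t)‖ :=
                Finset.sum_le_sum_of_subset_of_nonneg (Finset.filter_subset _ _)
                  (fun c _ _ => by positivity)
            _ = (ν * ‖𝒦‖) * μ ^ (m - 1) *
                  ∑ c ∈ (Fintype.piFinset fun _ : Fin m => Finset.Icc 1 N),
                  ∏ t, ‖ψ (c t)‖ := by rw [Finset.mul_sum]
            _ = (ν * ‖𝒦‖) * μ ^ (m - 1) * S ^ m := by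
                rw [Finset.sum_prod_piFinset (Finset.Icc 1 N) (fun _ k => ‖ψ k‖),
                  Finset.prod_const]
                simp [Finset.card_univ, hSdef]
        -- step 3: numeric estimate
        refine le_trans step2 ?_
        have hSq : ∀ m ∈ Finset.Icc 2 (N + 1),
            (ν * ‖𝒦‖) * μ ^ (m - 1) * S ^ m ≤ C * (2 * α) * q ^ (m - 1) := by
          intro m hm
          simp only [Finset.mem_Icc] at hm
          obtain ⟨k, rfl⟩ : ∃ k, m = k + 1 := ⟨m - 1, by omega⟩
          have hS2α : S ≤ 2 * α := ih
          have h1 : μ ^ (k + 1 - 1) * S ^ (k + 1) ≤ μ ^ (k + 1 - 1) * (2 * α) ^ (k + 1) :=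
            mul_le_mul_of_nonneg_left (pow_le_pow_left₀ hS0 hS2α (k + 1)) (by positivity)
          have h2 : μ ^ (k + 1 - 1) * (2 * α) ^ (k + 1) = (2 * α) * q ^ (k + 1 - 1) := by
            simp only [Nat.add_sub_cancel]
            rw [hqdef, pow_succ]
            ring
          have hνK : ν * ‖𝒦‖ ≤ C := hCK
          have hνK0 : 0 ≤ ν * ‖𝒦‖ := by positivity
          calc (ν * ‖𝒦‖) * μ ^ (k + 1 - 1) * S ^ (k + 1)
              = (ν * ‖𝒦‖) * (μ ^ (k + 1 - 1) * S ^ (k + 1)) := by ring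
            _ ≤ C * (μ ^ (k + 1 - 1) * (2 * α) ^ (k + 1)) := by
                refine mul_le_mul hνK h1 (by positivity) hC0.le
            _ = C * (2 * α) * q ^ (k + 1 - 1) := by rw [h2]; ring
        refine le_trans (Finset.sum_le_sum hSq) ?_
        rw [← Finset.mul_sum]
        have hre : ∑ m ∈ Finset.Icc 2 (N + 1), q ^ (m - 1) = ∑ k ∈ Finset.Icc 1 N, q ^ k := by
          apply Finset.sum_nbij' (fun m => m - 1) (fun k => k + 1)
          · intro a ha; simp only [Finset.mem_Icc] at *; omega
          · intro a ha; simp only [Finset.mem_Icc] at *; omega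
          · intro a ha; simp only [Finset.mem_Icc] at ha; omega
          · intro a ha; simp only [Finset.mem_Icc] at ha; omega
          · intro a ha; rfl
        rw [hre]
        have hgeom : ∑ k ∈ Finset.Icc 1 N, q ^ k ≤ 2 * q :=
          le_trans (geom_icc_le q hq0 hqhalf N) (by nlinarith [pow_nonneg hq0 (N + 1)])
        calc C * (2 * α) * ∑ k ∈ Finset.Icc 1 N, q ^ k
            ≤ C * (2 * α) * (2 * q) := by
              refine mul_le_mul_of_nonneg_left hgeom (by positivity)
          _ = (4 * C * q) * α := by ring
          _ ≤ 1 * α := mul_le_mul_of_nonneg_right h4Cq hα0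
          _ = α := one_mul α
      linarith
  -- conclude convergence
  have hsum : Summable (fun n : ℕ => ψ (n + 1)) := by
    apply Summable.of_norm
    apply summable_of_sum_range_le (c := 2 * α) (fun n => norm_nonneg _)
    intro n
    rw [← icc_one_sum_eq_range (fun j => ‖ψ j‖) n]
    exact key n
  obtain ⟨L, hL⟩ := hsum
  refine ⟨L, ?_⟩
  have h2 := hL.tendsto_sum_nat
  refine h2.congr ?_
  intro n
  exact (icc_one_sum_eq_range ψ n).symm
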